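/- arXiv:gr-qc/9512026 — 6 statements merged into one kernel-verified Lean document; each statement's English description precedes it below -/
import Mathlib

section
/- Let Γ be a manifold and S a set of smooth real-valued functions on Γ that separates points of Γ. Then the set of points p ∈ Γ at which the differentials {df_p : f ∈ S} span the cotangent space T_p*Γ is dense in Γ. Equivalently, there is no nonempty open set U ⊆ Γ on which the span of the differentials of all elements of S is a proper subspace of the cotangent space at every point. -/
open Module Submodule Set Metric Topology Filter

set_option maxHeartbeats 2000000 in
/-- Key lemma: on any nonempty open set there is a point where the differentials span. -/
theorem stmt0_key
    {E : Type*} [NormedAddCommGroup E] [NormedSpace ℝ E] [FiniteDimensional ℝ E]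
    (S : Set (E → ℝ))
    (hsmooth : ∀ f ∈ S, ContDiff ℝ (⊤ : ℕ∞) f)
    (hsep : ∀ p q : E, p ≠ q → ∃ f ∈ S, f p ≠ f q)
    (U : Set E) (hU : IsOpen U) (hne : U.Nonempty) :
    ∃ p ∈ U, Submodule.span ℝ ((fun f => (fderiv ℝ f p : E →L[ℝ] ℝ)) '' S)
      = (⊤ : Submodule ℝ (E →L[ℝ] ℝ)) := by
  by_contra hcon
  push_neg at hcon
  set sp : E → Submodule ℝ (E →L[ℝ] ℝ) :=
    fun p => Submodule.span ℝ ((fun f => (fderiv ℝ f p : E →L[ℝ] ℝ)) '' S) with hsp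
  set rk : E → ℕ := fun p => finrank ℝ (sp p) with hrk
  -- maximal rank point
  have hbdd : BddAbove (rk '' U) := by
    refine ⟨finrank ℝ (E →L[ℝ] ℝ), ?_⟩
    rintro _ ⟨p, hp, rfl⟩
    exact (sp p).finrank_le
  obtain ⟨p₀, hp₀U, hp₀eq⟩ := Nat.sSup_mem (hne.image rk) hbdd
  have hp₀max : ∀ p ∈ U, rk p ≤ rk p₀ := fun p hp => hp₀eq ▸ le_csSup hbdd ⟨p, hp, rfl⟩
  -- choose independent differentials spanning sp p₀
  obtain ⟨b, hbsub, hbspan, hbli⟩ :=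
    exists_linearIndependent ℝ ((fun f => (fderiv ℝ f p₀ : E →L[ℝ] ℝ)) '' S)
  have hbfin : b.Finite := hbli.setFinite
  haveI : Fintype b := hbfin.fintype
  set r : ℕ := Fintype.card b with hr
  set e : Fin r ≃ b := (Fintype.equivFin b).symm with he
  have hchoice : ∀ i : Fin r, ∃ f, f ∈ S ∧ (fderiv ℝ f p₀ : E →L[ℝ] ℝ) = ((e i : E →L[ℝ] ℝ)) := by
    intro i
    obtain ⟨f, hf, hfe⟩ := hbsub (e i).2
    exact ⟨f, hf, hfe⟩
  choose g hgS hgd using hchoice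
  set Dg : E → Fin r → (E →L[ℝ] ℝ) := fun p i => fderiv ℝ (g i) p with hDg
  have hDgp₀ : Dg p₀ = fun i => ((e i : E →L[ℝ] ℝ)) := funext fun i => hgd i
  have h_li₀ : LinearIndependent ℝ (Dg p₀) := by
    rw [hDgp₀]; exact hbli.comp e e.injective
  have h_range₀ : Set.range (Dg p₀) = b := by
    rw [hDgp₀]
    rw [show (fun i => ((e i : E →L[ℝ] ℝ))) = (Subtype.val ∘ e) from rfl, Set.range_comp,
      e.surjective.range_eq, Set.image_univ, Subtype.range_coe]
  have h_span₀ : Submodule.span ℝ (Set.range (Dg p₀)) = sp p₀ := by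
    rw [h_range₀, hbspan]
  have hrk₀ : rk p₀ = r := by
    rw [hrk]; dsimp only; rw [← h_span₀, finrank_span_eq_card h_li₀, Fintype.card_fin]
  -- open set where Dg is independent
  have hDgc : Continuous fun p => Dg p :=
    continuous_pi fun i => (hsmooth (g i) (hgS i)).continuous_fderiv (by simp)
  set V : Set E := U ∩ ((fun p => Dg p) ⁻¹' {v | LinearIndependent ℝ v}) with hV
  have hVopen : IsOpen V := hU.inter (isOpen_setOf_linearIndependent.preimage hDgc)
  have hp₀V : p₀ ∈ V := ⟨hp₀U, h_li₀⟩
  have h_spanV : ∀ p ∈ V, Submodule.span ℝ (Set.range (Dg p)) = sp p := by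
    intro p hp
    have h1 : Submodule.span ℝ (Set.range (Dg p)) ≤ sp p :=
      Submodule.span_le.2 (Set.range_subset_iff.2 fun i => Submodule.subset_span ⟨g i, hgS i, rfl⟩)
    refine Submodule.eq_of_le_of_finrank_le h1 ?_
    rw [finrank_span_eq_card hp.2, Fintype.card_fin]
    exact (hp₀max p hp.1).trans_eq hrk₀
  -- r < finrank E
  have hEdual : finrank ℝ (E →L[ℝ] ℝ) = finrank ℝ E := by
    rw [← (LinearMap.toContinuousLinearMap :
        (E →ₗ[ℝ] ℝ) ≃ₗ[ℝ] (E →L[ℝ] ℝ)).finrank_eq, Module.finrank_linearMap_self]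
  have hrn : r < finrank ℝ E := by
    rw [← hrk₀, ← hEdual]
    exact Submodule.finrank_lt (hcon p₀ hp₀U)
  -- the map F and its derivative
  set F : E → (Fin r → ℝ) := fun x i => g i x with hF
  have hFc : ContDiff ℝ (⊤ : ℕ∞) F := contDiff_pi.2 fun i => hsmooth (g i) (hgS i)
  set DF : E → (E →L[ℝ] (Fin r → ℝ)) := fun p => ContinuousLinearMap.pi (Dg p) with hDF
  have hDFd : ∀ p, HasFDerivAt F (DF p) p := fun p =>
    hasFDerivAt_pi.2 fun i =>
      (((hsmooth (g i) (hgS i)).differentiable (by simp)) p).hasFDerivAt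
  -- surjectivity of DF p₀
  have hsurj : Function.Surjective (DF p₀) := by
    by_contra hns
    have hlt : LinearMap.range ((DF p₀ : E →L[ℝ] (Fin r → ℝ)) : E →ₗ[ℝ] (Fin r → ℝ)) < ⊤ :=
      lt_top_iff_ne_top.2 fun h => hns (LinearMap.range_eq_top.1 h)
    obtain ⟨φ, hφ0, hφ⟩ := Submodule.exists_dual_map_eq_bot_of_lt_top hlt inferInstance
    set c : Fin r → ℝ := fun j => φ (Pi.single j 1) with hc
    have hφval : ∀ y : Fin r → ℝ, φ y = ∑ j, y j * c j := by
      intro y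
      have hy : y = ∑ j, y j • (Pi.single j 1 : Fin r → ℝ) := by
        ext k; simp [Pi.single_apply]
      conv_lhs => rw [hy]
      rw [map_sum]
      exact Finset.sum_congr rfl fun j _ => by rw [map_smul]; simp [hc, smul_eq_mul]
    have hker : ∀ x : E, φ (DF p₀ x) = 0 := by
      intro x
      have hmem : φ (DF p₀ x) ∈ Submodule.map φ
          (LinearMap.range ((DF p₀ : E →L[ℝ] (Fin r → ℝ)) : E →ₗ[ℝ] (Fin r → ℝ))) :=
        ⟨DF p₀ x, LinearMap.mem_range_self _ x, rfl⟩
      rw [hφ] at hmem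
      exact hmem
    have hzero : ∑ j, c j • Dg p₀ j = 0 := by
      ext x
      have hx := hker x
      rw [hφval] at hx
      simpa [hDF, ContinuousLinearMap.pi_apply, mul_comm] using hx
    have hc0 : ∀ j, c j = 0 := Fintype.linearIndependent_iff.1 h_li₀ c hzero
    refine hφ0 ?_
    apply LinearMap.ext
    intro y
    rw [hφval]
    simp [hc0]
  -- kernel K
  set K : Submodule ℝ E := LinearMap.ker (DF p₀ : E →ₗ[ℝ] (Fin r → ℝ)) with hK
  have hrank : finrank ℝ (Fin r → ℝ) + finrank ℝ K = finrank ℝ E := by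
    have h0 := LinearMap.finrank_range_add_finrank_ker
      ((DF p₀ : E →L[ℝ] (Fin r → ℝ)) : E →ₗ[ℝ] (Fin r → ℝ))
    have h1 : LinearMap.range ((DF p₀ : E →L[ℝ] (Fin r → ℝ)) : E →ₗ[ℝ] (Fin r → ℝ)) = ⊤ :=
      LinearMap.range_eq_top.2 hsurj
    rwa [h1, finrank_top] at h0
  have hfr : finrank ℝ (Fin r → ℝ) = r := by simp
  have hKpos : 0 < finrank ℝ K := by omega
  haveI : Nontrivial K := Module.nontrivial_of_finrank_pos hKpos
  -- projection onto K
  obtain ⟨π, hπ⟩ := Submodule.ClosedComplemented.of_finiteDimensional K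
  set Ψ : E → (Fin r → ℝ) × K := fun x => (F x, π x) with hΨ
  have hΨc : ContDiff ℝ (⊤ : ℕ∞) Ψ := hFc.prodMk π.contDiff
  set L : E →L[ℝ] (Fin r → ℝ) × K := (DF p₀).prod π with hL
  have hΨd : HasFDerivAt Ψ L p₀ := (hDFd p₀).prodMk π.hasFDerivAt
  have hLbij : Function.Bijective L := by
    have hzero : ∀ x : E, L x = 0 → x = 0 := by
      intro x hx
      have h1 : DF p₀ x = 0 := congrArg Prod.fst hx
      have h2 : π x = 0 := congrArg Prod.snd hx
      have hxK : x ∈ K := LinearMap.mem_ker.2 h1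
      have h3 : π x = ⟨x, hxK⟩ := hπ ⟨x, hxK⟩
      have h4 : (⟨x, hxK⟩ : K) = 0 := by rw [← h3, h2]
      exact congrArg Subtype.val h4
    have hinj : Function.Injective L := by
      intro a bb hab
      have := hzero (a - bb) (by rw [map_sub, hab, sub_self])
      exact sub_eq_zero.1 this
    have hdim : finrank ℝ E = finrank ℝ ((Fin r → ℝ) × K) := by
      rw [Module.finrank_prod]; omega
    exact ⟨hinj, (LinearMap.injective_iff_surjective_of_finrank_eq_finrank hdim).1 hinj⟩
  set eL : E ≃L[ℝ] (Fin r → ℝ) × K :=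
    (LinearEquiv.ofBijective (L : E →ₗ[ℝ] (Fin r → ℝ) × K) hLbij).toContinuousLinearEquiv with heL
  have heLcoe : (eL : E →L[ℝ] (Fin r → ℝ) × K) = L := by ext x <;> rfl
  have hΨd' : HasFDerivAt Ψ (eL : E →L[ℝ] (Fin r → ℝ) × K) p₀ := by rw [heLcoe]; exact hΨd
  have hΨat : ContDiffAt ℝ (⊤ : ℕ∞) Ψ p₀ := hΨc.contDiffAt
  set P : OpenPartialHomeomorph E ((Fin r → ℝ) × K) := hΨat.toOpenPartialHomeomorph Ψ hΨd' (by simp) with hP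
  set Φ : (Fin r → ℝ) × K → E := hΨat.localInverse hΨd' (by simp) with hΦ
  have hΦP : Φ = ⇑P.symm := rfl
  have hΦat : ContDiffAt ℝ (⊤ : ℕ∞) Φ (Ψ p₀) := hΨat.to_localInverse hΨd' (by simp)
  obtain ⟨u, hu_nhds, hu⟩ := hΦat.contDiffOn (by exact_mod_cast (le_top : (1 : ℕ∞) ≤ ⊤) : (1 : WithTop ℕ∞) ≤ ((⊤ : ℕ∞) : WithTop ℕ∞))
    (fun h => by simp at h)
  set z₀ : K := π p₀ with hz₀def
  set ι : K → (Fin r → ℝ) × K := fun z => (F p₀, z) with hι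
  have hιz₀ : ι z₀ = Ψ p₀ := rfl
  have hιc : Continuous ι := continuous_const.prodMk continuous_id
  have hΦcont : ContinuousOn Φ P.target := by rw [hΦP]; exact P.continuousOn_symm
  set A : Set ((Fin r → ℝ) × K) := (P.target ∩ interior u) ∩ (Φ ⁻¹' V) with hA
  have hAopen : IsOpen A :=
    ContinuousOn.isOpen_inter_preimage (hΦcont.mono inter_subset_left)
      (P.open_target.inter isOpen_interior) hVopen
  set Z : Set K := ι ⁻¹' A with hZ
  have hZopen : IsOpen Z := hAopen.preimage hιc
  have hΦΨp₀ : Φ (Ψ p₀) = p₀ := hΨat.localInverse_apply_image hΨd' (by simp)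
  have hz₀Z : z₀ ∈ Z := by
    refine ⟨⟨?_, ?_⟩, ?_⟩
    · show ι z₀ ∈ P.target
      rw [hιz₀]
      exact hΨat.image_mem_toOpenPartialHomeomorph_target hΨd' (by simp)
    · show ι z₀ ∈ interior u
      rw [hιz₀]
      exact mem_interior_iff_mem_nhds.2 hu_nhds
    · show Φ (ι z₀) ∈ V
      rw [hιz₀, hΦΨp₀]
      exact hp₀V
  obtain ⟨ε, hε, hball⟩ := Metric.isOpen_iff.1 hZopen z₀ hz₀Z
  set γ : K → E := fun z => Φ (ι z) with hγ
  have hΨγ : ∀ z ∈ Z, Ψ (γ z) = ι z := fun z hz => P.right_inv hz.1.1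
  have hFγ : ∀ z ∈ Z, F (γ z) = F p₀ := fun z hz => congrArg Prod.fst (hΨγ z hz)
  have hπγ : ∀ z ∈ Z, π (γ z) = z := fun z hz => congrArg Prod.snd (hΨγ z hz)
  have hγV : ∀ z ∈ Z, γ z ∈ V := fun z hz => hz.2
  have hιd : ∀ z : K, DifferentiableAt ℝ ι z := fun z =>
    (differentiableAt_const _).prodMk differentiableAt_id
  have hγd : ∀ z ∈ Z, DifferentiableAt ℝ γ z := by
    intro z hz
    have hu' : u ∈ 𝓝 (ι z) := mem_nhds_iff.2 ⟨interior u, interior_subset, isOpen_interior, hz.1.2⟩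
    exact ((hu.contDiffAt hu').differentiableAt one_ne_zero).comp z (hιd z)
  have hfd0 : ∀ f ∈ S, ∀ z ∈ Z, fderiv ℝ (f ∘ γ) z = 0 := by
    intro f hfS z hz
    have hfdiff : DifferentiableAt ℝ f (γ z) := ((hsmooth f hfS).differentiable (by simp)) _
    have hgi0 : ∀ i, (Dg (γ z) i).comp (fderiv ℝ γ z) = 0 := by
      intro i
      have hev : (g i ∘ γ) =ᶠ[nhds z] fun _ => F p₀ i :=
        Filter.eventuallyEq_of_mem (hZopen.mem_nhds hz) fun w hw => congrFun (hFγ w hw) i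
      have h1 : fderiv ℝ (g i ∘ γ) z = 0 := by
        rw [hev.fderiv_eq]; exact fderiv_const_apply _
      have h2 : fderiv ℝ (g i ∘ γ) z = (Dg (γ z) i).comp (fderiv ℝ γ z) :=
        fderiv_comp z (((hsmooth (g i) (hgS i)).differentiable (by simp)) _) (hγd z hz)
      rw [← h2, h1]
    have hmem : fderiv ℝ f (γ z) ∈ Submodule.span ℝ (Set.range (Dg (γ z))) := by
      rw [h_spanV _ (hγV z hz)]
      exact Submodule.subset_span ⟨f, hfS, rfl⟩
    obtain ⟨c, hc⟩ := (mem_span_range_iff_exists_fun ℝ).1 hmem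
    have hcomp : fderiv ℝ (f ∘ γ) z = (fderiv ℝ f (γ z)).comp (fderiv ℝ γ z) :=
      fderiv_comp z hfdiff (hγd z hz)
    rw [hcomp, ← hc]
    ext x
    simp only [ContinuousLinearMap.coe_comp', Function.comp_apply,
      ContinuousLinearMap.coe_sum', Finset.sum_apply, ContinuousLinearMap.coe_smul',
      Pi.smul_apply, ContinuousLinearMap.zero_apply, smul_eq_mul]
    refine Finset.sum_eq_zero fun i _ => ?_
    have h3 := congrArg (fun T : K →L[ℝ] ℝ => T x) (hgi0 i)
    simp only [ContinuousLinearMap.coe_comp', Function.comp_apply,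
      ContinuousLinearMap.zero_apply] at h3
    rw [h3, mul_zero]
  have hconst : ∀ f ∈ S, ∀ z ∈ ball z₀ ε, f (γ z) = f (γ z₀) := by
    intro f hfS z hz
    have hdiff : DifferentiableOn ℝ (f ∘ γ) (ball z₀ ε) := fun w hw =>
      ((((hsmooth f hfS).differentiable (by simp)) _).comp w (hγd w (hball hw))).differentiableWithinAt
    exact (convex_ball z₀ ε).is_const_of_fderivWithin_eq_zero hdiff
      (fun w hw => by rw [fderivWithin_of_isOpen isOpen_ball hw]; exact hfd0 f hfS w (hball hw))
      hz (mem_ball_self hε)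
  obtain ⟨v, hv⟩ := exists_ne (0 : K)
  have hvn : (0 : ℝ) < ‖v‖ := norm_pos_iff.2 hv
  set z₁ : K := z₀ + (ε / (2 * ‖v‖)) • v with hz₁def
  have hnorm : ‖(ε / (2 * ‖v‖)) • v‖ = ε / 2 := by
    have h8 : (v : E) ≠ 0 := fun h => hv (Submodule.coe_eq_zero.1 h)
    have h7 : ‖(v : E)‖ ≠ 0 := ne_of_gt (norm_pos_iff.2 h8)
    rw [norm_smul, Real.norm_eq_abs, abs_of_pos (by positivity)]
    field_simp
  have hz₁ball : z₁ ∈ ball z₀ ε := by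
    rw [mem_ball, dist_eq_norm, hz₁def, add_sub_cancel_left, hnorm]
    linarith
  have hz₁ne : z₁ ≠ z₀ := by
    rw [hz₁def]
    intro h
    have h5 : (ε / (2 * ‖v‖)) • v = 0 := by
      have := add_eq_left.1 h
      exact this
    rcases smul_eq_zero.1 h5 with h6 | h6
    · have : (0 : ℝ) < ε / (2 * ‖v‖) := by positivity
      exact this.ne' h6
    · exact hv h6
  have hne' : γ z₁ ≠ γ z₀ :=
    fun h => hz₁ne (by rw [← hπγ z₁ (hball hz₁ball), ← hπγ z₀ hz₀Z, h])
  obtain ⟨f, hfS, hfne⟩ := hsep (γ z₁) (γ z₀) hne'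
  exact hfne (hconst f hfS z₁ hz₁ball)

/-- If a set `S` of smooth real functions on `Γ` separates points,
then the set of points where the differentials of elements of `S` span the
cotangent space is dense; equivalently there is no nonempty open set on which
the span is proper everywhere. -/
theorem stmt0
    {E : Type*} [NormedAddCommGroup E] [NormedSpace ℝ E] [FiniteDimensional ℝ E]
    (S : Set (E → ℝ))
    (hsmooth : ∀ f ∈ S, ContDiff ℝ (⊤ : ℕ∞) f)
    (hsep : ∀ p q : E, p ≠ q → ∃ f ∈ S, f p ≠ f q) :
    Dense {p : E | Submodule.span ℝ ((fun f => (fderiv ℝ f p : E →L[ℝ] ℝ)) '' S)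
      = (⊤ : Submodule ℝ (E →L[ℝ] ℝ))} ∧
    ¬ ∃ U : Set E, IsOpen U ∧ U.Nonempty ∧ ∀ p ∈ U,
      Submodule.span ℝ ((fun f => (fderiv ℝ f p : E →L[ℝ] ℝ)) '' S)
        < (⊤ : Submodule ℝ (E →L[ℝ] ℝ)) := by
  constructor
  · rw [dense_iff_inter_open]
    intro U hU hne
    obtain ⟨p, hp, hspan⟩ := stmt0_key S hsmooth hsep U hU hne
    exact ⟨p, hp, hspan⟩
  · rintro ⟨U, hU, hne, hlt⟩
    obtain ⟨p, hp, hspan⟩ := stmt0_key S hsmooth hsep U hU hne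
    exact (hlt p hp).ne hspan
end

section
/- Let (Γ₁, Ω₁) and (Γ₂, Ω₂) be symplectic manifolds, θ : Γ₁ → Γ₂ a diffeomorphism, and S₁ a set of smooth functions on Γ₁ that separates points. If {f,g}₁ = {f∘θ^{-1}, g∘θ^{-1}}₂ for all f, g ∈ S₁, then Ω₁ = θ*Ω₂. -/
open Set Metric Module Submodule Filter Topology

set_option maxHeartbeats 1000000 in
theorem aux_dense_span {E : Type*} [NormedAddCommGroup E] [NormedSpace ℝ E]
    [FiniteDimensional ℝ E]
    (S : Set (E → ℝ)) (hS : ∀ f ∈ S, ContDiff ℝ (⊤ : ℕ∞) f)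
    (hsep : ∀ p q : E, p ≠ q → ∃ f ∈ S, f p ≠ f q) :
    Dense {p : E | Submodule.span ℝ {ξ : E →L[ℝ] ℝ | ∃ f ∈ S, fderiv ℝ f p = ξ} = ⊤} := by
  classical
  set D : E → Set (E →L[ℝ] ℝ) := fun p => {ξ | ∃ f ∈ S, fderiv ℝ f p = ξ} with hD
  rw [dense_iff_inter_open]
  intro U hUopen hUne
  by_contra hcon
  have hU' : ∀ p ∈ U, Submodule.span ℝ (D p) ≠ ⊤ := by
    intro p hp h
    exact hcon ⟨p, hp, h⟩
  set r : E → ℕ := fun p => finrank ℝ (Submodule.span ℝ (D p)) with hr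
  -- choose a point of maximal rank in U
  have hbdd : BddAbove (r '' U) := by
    refine ⟨finrank ℝ (E →L[ℝ] ℝ), ?_⟩
    rintro - ⟨p, -, rfl⟩
    exact Submodule.finrank_le _
  obtain ⟨p, hpU⟩ := hUne
  have hSne : (r '' U).Nonempty := ⟨r p, ⟨p, hpU, rfl⟩⟩
  obtain ⟨p₀, hp₀U, hrp₀⟩ := Nat.sSup_mem hSne hbdd
  have hmax : ∀ q ∈ U, r q ≤ r p₀ := fun q hq => hrp₀ ▸ le_csSup hbdd ⟨q, hq, rfl⟩
  set k : ℕ := r p₀ with hk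
  -- select finitely many functions whose differentials at p₀ form a basis of the span
  obtain ⟨b, hbD, hbspan, hbli⟩ := exists_linearIndependent ℝ (D p₀)
  haveI : Fintype b := hbli.setFinite.fintype
  have hw : ∀ ξ : b, ∃ f, f ∈ S ∧ fderiv ℝ f p₀ = ξ := fun ξ => hbD ξ.2
  choose φ hφS hφd using hw
  set fam : E → b → (E →L[ℝ] ℝ) := fun p ξ => fderiv ℝ (φ ξ) p with hfam
  have hfam0 : fam p₀ = (Subtype.val : b → (E →L[ℝ] ℝ)) := funext hφd
  have hfamli : LinearIndependent ℝ (fam p₀) := by rw [hfam0]; exact hbli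
  have hfamcont : Continuous fam :=
    continuous_pi fun ξ => (hS _ (hφS ξ)).continuous_fderiv (by simp)
  set V : Set E := fam ⁻¹' {v | LinearIndependent ℝ v} with hV
  have hVopen : IsOpen V := isOpen_setOf_linearIndependent.preimage hfamcont
  have hp₀V : p₀ ∈ V := hfamli
  have hcardb : Fintype.card b = k := by
    have h1 : finrank ℝ (Submodule.span ℝ b) = b.toFinset.card :=
      finrank_span_set_eq_card hbli
    rw [hbspan, Set.toFinset_card] at h1
    exact h1.symm
  -- key fact: near p₀ (within U), every differential lies in the span of the chosen family
  have factA : ∀ p ∈ V ∩ U, ∀ g ∈ S,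
      fderiv ℝ g p ∈ Submodule.span ℝ (Set.range (fam p)) := by
    rintro p ⟨hpV, hpU'⟩ g hg
    have h1 : Submodule.span ℝ (Set.range (fam p)) ≤ Submodule.span ℝ (D p) := by
      apply Submodule.span_le.2
      rintro - ⟨ξ, rfl⟩
      exact Submodule.subset_span ⟨φ ξ, hφS ξ, rfl⟩
    have h2 : finrank ℝ (Submodule.span ℝ (Set.range (fam p))) = k := by
      rw [finrank_span_eq_card hpV, hcardb]
    have heq := Submodule.eq_of_le_of_finrank_le h1 (by rw [h2]; exact hmax p hpU')
    rw [heq]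
    exact Submodule.subset_span ⟨g, hg, rfl⟩
  -- extend to a basis of the dual
  set T : Set (E →L[ℝ] ℝ) := (show LinearIndepOn ℝ id b from hbli).extend (Set.subset_univ b) with hT
  set B : Basis T ℝ (E →L[ℝ] ℝ) := Basis.extend (show LinearIndepOn ℝ id b from hbli) with hB
  have hbT : b ⊆ T := (show LinearIndepOn ℝ id b from hbli).subset_extend _
  have hspanT : Submodule.span ℝ T = ⊤ := by
    have h := B.span_eq
    rwa [hB, Basis.coe_extend, Subtype.range_coe] at h
  haveI : Fintype T := FiniteDimensional.fintypeBasisIndex B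
  obtain ⟨η₀, hη₀T, hη₀b⟩ : ∃ η, η ∈ T ∧ η ∉ b := by
    by_contra h
    push_neg at h
    exact hU' p₀ hp₀U (by rw [← hbspan]; exact eq_top_iff.2 (hspanT ▸ Submodule.span_mono h))

  -- the nonlinear "coordinate chart" N
  set c : T → ℝ := Pi.single (⟨η₀, hη₀T⟩ : T) (1 : ℝ) with hc
  set N : E → (T → ℝ) :=
    fun p η => if h : (η : E →L[ℝ] ℝ) ∈ b then φ ⟨η, h⟩ p else (η : E →L[ℝ] ℝ) p with hN
  have hNsmooth : ContDiff ℝ (⊤ : ℕ∞) N := by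
    apply contDiff_pi.2
    intro η
    by_cases h : (η : E →L[ℝ] ℝ) ∈ b
    · simp only [hN, dif_pos h]
      exact hS _ (hφS ⟨η, h⟩)
    · simp only [hN, dif_neg h]
      exact (η : E →L[ℝ] ℝ).contDiff
  set P : E →L[ℝ] (T → ℝ) := ContinuousLinearMap.pi (fun η : T => (η : E →L[ℝ] ℝ)) with hP
  have hNP : HasFDerivAt N P p₀ := by
    apply hasFDerivAt_pi.2
    intro η
    by_cases h : (η : E →L[ℝ] ℝ) ∈ b
    · simp only [hN, dif_pos h]
      have hd := (((hS _ (hφS ⟨η, h⟩)).differentiable (by simp)) p₀).hasFDerivAt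
      rwa [hφd ⟨η, h⟩] at hd
    · simp only [hN, dif_neg h]
      exact (η : E →L[ℝ] ℝ).hasFDerivAt
  have Pinj : Function.Injective P := by
    intro x y hxy
    have h0 : ∀ ζ : E →L[ℝ] ℝ, ζ ∈ Submodule.span ℝ T → ζ (x - y) = 0 := by
      intro ζ hζ
      induction hζ using Submodule.span_induction with
      | mem ζ hζ =>
        have := congrFun hxy ⟨ζ, hζ⟩
        simp only [hP, ContinuousLinearMap.pi_apply] at this
        simp [map_sub, this]
      | zero => simp
      | add ζ₁ ζ₂ _ _ h₁ h₂ => simp [h₁, h₂]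
      | smul a ζ _ h => simp [h]
    by_contra hne
    obtain ⟨f, hf⟩ := SeparatingDual.exists_ne_zero (R := ℝ) (sub_ne_zero.2 hne)
    exact hf (h0 f (hspanT ▸ Submodule.mem_top))
  have hfinrank : finrank ℝ E = finrank ℝ (T → ℝ) := by
    calc finrank ℝ E = finrank ℝ (Module.Dual ℝ E) := Subspace.dual_finrank_eq.symm
    _ = finrank ℝ (E →L[ℝ] ℝ) := LinearEquiv.finrank_eq LinearMap.toContinuousLinearMap
    _ = Fintype.card T := finrank_eq_card_basis B
    _ = finrank ℝ (T → ℝ) := (finrank_fintype_fun_eq_card ℝ).symm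
  set eqv : E ≃L[ℝ] (T → ℝ) :=
    ((P : E →ₗ[ℝ] (T → ℝ)).linearEquivOfInjective Pinj hfinrank).toContinuousLinearEquiv
    with heqv
  have hcoe : (eqv : E →L[ℝ] (T → ℝ)) = P := by
    apply ContinuousLinearMap.ext
    intro x
    calc ((eqv : E →L[ℝ] (T → ℝ)) x) = eqv x := rfl
    _ = P x := by simp [heqv, LinearMap.linearEquivOfInjective_apply]
  have hNP' : HasFDerivAt N (eqv : E →L[ℝ] (T → ℝ)) p₀ := by rw [hcoe]; exact hNP
  have hNct : ContDiffAt ℝ (⊤ : ℕ∞) N p₀ := hNsmooth.contDiffAt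
  set inv : (T → ℝ) → E := hNct.localInverse hNP' (by simp) with hinv
  have hti : inv (N p₀) = p₀ := hNct.localInverse_apply_image hNP' (by simp)
  have hinv_smooth : ContDiffAt ℝ (⊤ : ℕ∞) inv (N p₀) := hNct.to_localInverse hNP' (by simp)
  have hright : ∀ᶠ y in 𝓝 (N p₀), N (inv y) = y :=
    (hNct.hasStrictFDerivAt' hNP' (by simp)).eventually_right_inverse
  clear_value inv
  obtain ⟨u, hu_nhds, hu_cd⟩ := hinv_smooth.contDiffOn (m := 1) (by simp)
    (by intro h; exact absurd h (by norm_num))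
  have hu_diff : ∀ y ∈ interior u, DifferentiableAt ℝ inv y := by
    intro y hy
    exact (hu_cd.differentiableOn one_ne_zero).differentiableAt
      (mem_of_superset (isOpen_interior.mem_nhds hy) interior_subset)
  -- the curve
  set ℓ : ℝ → (T → ℝ) := fun t => N p₀ + t • c with hℓ
  have hℓ0 : ℓ 0 = N p₀ := by simp [hℓ]
  have hℓcont : Continuous ℓ := continuous_const.add (continuous_id.smul continuous_const)
  have hℓtendsto : Tendsto ℓ (𝓝 0) (𝓝 (N p₀)) := by
    rw [← hℓ0]; exact hℓcont.continuousAt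
  set γ : ℝ → E := fun t => inv (ℓ t) with hγ
  have hγtendsto : Tendsto γ (𝓝 0) (𝓝 p₀) := by
    rw [← hti]
    exact (hinv_smooth.continuousAt.tendsto).comp hℓtendsto
  have hG : ∀ᶠ t in 𝓝 (0 : ℝ),
      (N (γ t) = ℓ t ∧ ℓ t ∈ interior u) ∧ γ t ∈ V ∩ U := by
    have e1 : ∀ᶠ t in 𝓝 (0 : ℝ), N (γ t) = ℓ t := hℓtendsto.eventually hright
    have e2 : ∀ᶠ t in 𝓝 (0 : ℝ), ℓ t ∈ interior u :=
      hℓtendsto.eventually_mem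
        (isOpen_interior.mem_nhds (mem_interior_iff_mem_nhds.2 hu_nhds))
    have e3 : ∀ᶠ t in 𝓝 (0 : ℝ), γ t ∈ V ∩ U :=
      hγtendsto.eventually_mem ((hVopen.inter hUopen).mem_nhds ⟨hp₀V, hp₀U⟩)
    exact (e1.and e2).and e3
  obtain ⟨ε, hε, hball⟩ := Metric.eventually_nhds_iff_ball.1 hG
  have hIoo : ball (0 : ℝ) ε = Ioo (-ε) ε := by
    rw [Real.ball_eq_Ioo]; norm_num
  set I : Set ℝ := Ioo (-ε) ε with hI
  have hball' : ∀ t ∈ I, (N (γ t) = ℓ t ∧ ℓ t ∈ interior u) ∧ γ t ∈ V ∩ U := by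
    intro t ht; exact hball t (by rwa [hIoo])
  have hγ0 : γ 0 = p₀ := by rw [hγ]; simp only [hℓ0]; exact hti
  have hγdiff : ∀ t ∈ I, DifferentiableAt ℝ γ t := by
    intro t ht
    exact (hu_diff _ ((hball' t ht).1.2)).comp t
      ((differentiableAt_const _).add (differentiableAt_id.smul_const c))
  -- the chosen functions are constant along the curve
  have hφconst : ∀ ξ : b, ∀ t ∈ I, φ ξ (γ t) = φ ξ p₀ := by
    intro ξ t ht
    have h1 := congrFun ((hball' t ht).1.1) ⟨(ξ : E →L[ℝ] ℝ), hbT ξ.2⟩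
    have hne : (⟨(ξ : E →L[ℝ] ℝ), hbT ξ.2⟩ : T) ≠ ⟨η₀, hη₀T⟩ := by
      intro h
      have h' : (ξ : E →L[ℝ] ℝ) = η₀ := congrArg Subtype.val h
      exact hη₀b (h' ▸ ξ.2)
    have hcη : c ⟨(ξ : E →L[ℝ] ℝ), hbT ξ.2⟩ = 0 := Pi.single_eq_of_ne hne 1
    simp only [hN, hℓ, Pi.add_apply, Pi.smul_apply, hcη, smul_eq_mul, mul_zero, add_zero,
      dif_pos ξ.2, Subtype.coe_eta] at h1
    exact h1
  -- all functions in S are constant along the curve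
  have hderiv0 : ∀ g ∈ S, ∀ t ∈ I, HasDerivAt (fun s => g (γ s)) 0 t := by
    intro g hg t ht
    have hγ' : HasDerivAt γ (fderiv ℝ γ t 1) t := ((hγdiff t ht).hasFDerivAt).hasDerivAt
    set v : E := fderiv ℝ γ t 1 with hv
    have hfam0' : ∀ ξ : b, fam (γ t) ξ v = 0 := by
      intro ξ
      have hD : HasDerivAt (fun s => φ ξ (γ s)) (fam (γ t) ξ v) t :=
        ((((hS _ (hφS ξ)).differentiable (by simp)) (γ t)).hasFDerivAt).comp_hasDerivAt t hγ'
      have hC : HasDerivAt (fun s => φ ξ (γ s)) 0 t := by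
        have heq : (fun s => φ ξ (γ s)) =ᶠ[𝓝 t] fun _ => φ ξ p₀ := by
          filter_upwards [isOpen_Ioo.mem_nhds ht] with s hs using hφconst ξ s hs
        exact (hasDerivAt_const t (φ ξ p₀)).congr_of_eventuallyEq heq
      exact hD.unique hC
    have hgspan := factA (γ t) (hball' t ht).2 g hg
    have hzero : fderiv ℝ g (γ t) v = 0 := by
      set ev : (E →L[ℝ] ℝ) →ₗ[ℝ] ℝ :=
        { toFun := fun ζ => ζ v
          map_add' := by intros; simp
          map_smul' := by intros; simp } with hev
      have hker : Submodule.span ℝ (Set.range (fam (γ t))) ≤ LinearMap.ker ev := by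
        apply Submodule.span_le.2
        rintro - ⟨ξ, rfl⟩
        exact hfam0' ξ
      exact hker hgspan
    have hfinal : HasDerivAt (fun s => g (γ s)) (fderiv ℝ g (γ t) v) t :=
      ((((hS _ hg).differentiable (by simp)) (γ t)).hasFDerivAt).comp_hasDerivAt t hγ'
    rwa [hzero] at hfinal
  -- conclude: γ (ε/2) is not separated from p₀
  have ht₁I : ∀ x ∈ Icc (0 : ℝ) (ε / 2), x ∈ I := by
    intro x hx
    constructor <;> [linarith [hx.1]; linarith [hx.2]]
  have hconstg : ∀ g ∈ S, g (γ (ε / 2)) = g p₀ := by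
    intro g hg
    have h := constant_of_has_deriv_right_zero (f := fun s => g (γ s)) (a := 0) (b := ε / 2)
      (fun s hs => ((hderiv0 g hg s (ht₁I s hs)).continuousAt).continuousWithinAt)
      (fun s hs => ((hderiv0 g hg s (ht₁I s (Ico_subset_Icc_self hs))).hasDerivWithinAt))
    have h2 := h (ε / 2) ⟨by linarith, le_refl _⟩
    simp only [hγ0] at h2
    exact h2
  have hγne : γ (ε / 2) ≠ p₀ := by
    intro h
    have hmem : (ε / 2) ∈ I := ht₁I _ ⟨by linarith, le_refl _⟩
    have h1 := congrFun ((hball' _ hmem).1.1) ⟨η₀, hη₀T⟩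
    rw [h] at h1
    have hcη : c (⟨η₀, hη₀T⟩ : T) = 1 := Pi.single_eq_same _ _
    simp only [hℓ, Pi.add_apply, Pi.smul_apply, hcη, smul_eq_mul, mul_one] at h1
    linarith
  obtain ⟨f, hfS, hfne⟩ := hsep _ _ hγne
  exact hfne (hconstg f hfS)


/-- Let `(Γ₁, Ω₁)`, `(Γ₂, Ω₂)` be symplectic manifolds (modelled on
finite-dimensional vector spaces, the forms being smoothly varying nondegenerate
alternating bilinear forms with pointwise inverses `J₁`, `J₂` defining the
Poisson brackets `{f,g}ᵢ(p) = dg_p (Jᵢ p (df_p))`), `θ : Γ₁ → Γ₂` a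
diffeomorphism, and `S₁` a point-separating set of smooth functions with
`{f,g}₁ = {f∘θ⁻¹, g∘θ⁻¹}₂ ∘ θ` for all `f, g ∈ S₁`.  Then `Ω₁ = θ*Ω₂`. -/
theorem stmt2
    {E F : Type*} [NormedAddCommGroup E] [NormedSpace ℝ E] [FiniteDimensional ℝ E]
    [NormedAddCommGroup F] [NormedSpace ℝ F] [FiniteDimensional ℝ F]
    (Ω₁ : E → E →L[ℝ] E →L[ℝ] ℝ) (Ω₂ : F → F →L[ℝ] F →L[ℝ] ℝ)
    (hΩ₁c : Continuous Ω₁) (hΩ₂c : Continuous Ω₂)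
    (halt₁ : ∀ p v, Ω₁ p v v = 0) (halt₂ : ∀ q w, Ω₂ q w w = 0)
    (J₁ : E → (E →L[ℝ] ℝ) ≃ₗ[ℝ] E) (J₂ : F → (F →L[ℝ] ℝ) ≃ₗ[ℝ] F)
    (hJ₁ : ∀ p ξ v, Ω₁ p (J₁ p ξ) v = ξ v)
    (hJ₂ : ∀ q ξ w, Ω₂ q (J₂ q ξ) w = ξ w)
    (θ : E → F) (θinv : F → E)
    (hθ : ContDiff ℝ (⊤ : ℕ∞) θ) (hθinv : ContDiff ℝ (⊤ : ℕ∞) θinv)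
    (hli : Function.LeftInverse θinv θ) (hri : Function.RightInverse θinv θ)
    (S₁ : Set (E → ℝ)) (hS₁ : ∀ f ∈ S₁, ContDiff ℝ (⊤ : ℕ∞) f)
    (hsep : ∀ p q : E, p ≠ q → ∃ f ∈ S₁, f p ≠ f q)
    (hbr : ∀ f ∈ S₁, ∀ g ∈ S₁, ∀ p : E,
      fderiv ℝ g p (J₁ p (fderiv ℝ f p))
        = fderiv ℝ (g ∘ θinv) (θ p) (J₂ (θ p) (fderiv ℝ (f ∘ θinv) (θ p)))) :
    ∀ p v w, Ω₁ p v w = Ω₂ (θ p) (fderiv ℝ θ p v) (fderiv ℝ θ p w) := by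
  classical
  have hdense := aux_dense_span S₁ hS₁ hsep
  have hθd : ∀ x, DifferentiableAt ℝ θ x := fun x => (hθ.differentiable (by simp)) x
  have hθinvd : ∀ y, DifferentiableAt ℝ θinv y := fun y => (hθinv.differentiable (by simp)) y
  have claim2 : ∀ q : E, Submodule.span ℝ {ξ : E →L[ℝ] ℝ | ∃ f ∈ S₁, fderiv ℝ f q = ξ} = ⊤ →
      ∀ v w, Ω₁ q v w = Ω₂ (θ q) (fderiv ℝ θ q v) (fderiv ℝ θ q w) := by
    intro q hspan v w
    set Tp : E →L[ℝ] F := fderiv ℝ θ q with hTp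
    set Tq : F →L[ℝ] E := fderiv ℝ θinv (θ q) with hTq
    have hid1 : ∀ u : E, Tq (Tp u) = u := by
      intro u
      have hcomp : fderiv ℝ (θinv ∘ θ) q = Tq.comp Tp := fderiv_comp q (hθinvd _) (hθd _)
      have hidf : (θinv ∘ θ) = id := funext hli
      rw [hidf, fderiv_id] at hcomp
      have h := congrArg (fun (L : E →L[ℝ] E) => L u) hcomp.symm
      simpa using h
    have hid2 : ∀ u : F, Tp (Tq u) = u := by
      intro u
      have hcomp : fderiv ℝ (θ ∘ θinv) (θ q) = (fderiv ℝ θ (θinv (θ q))).comp Tq :=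
        fderiv_comp (θ q) (hθd _) (hθinvd _)
      rw [hli q] at hcomp
      have hidf : (θ ∘ θinv) = id := funext hri
      rw [hidf, fderiv_id] at hcomp
      have h := congrArg (fun (L : F →L[ℝ] F) => L u) hcomp.symm
      simpa [← hTp] using h
    have hchain : ∀ h ∈ S₁, fderiv ℝ (h ∘ θinv) (θ q) = (fderiv ℝ h q).comp Tq := by
      intro h hh
      have hc : fderiv ℝ (h ∘ θinv) (θ q)
          = (fderiv ℝ h (θinv (θ q))).comp (fderiv ℝ θinv (θ q)) :=
        fderiv_comp (θ q) (by rw [hli q]; exact ((hS₁ h hh).differentiable (by simp)) q) (hθinvd _)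
      rw [hli q] at hc
      exact hc
    have hbr' : ∀ f ∈ S₁, ∀ g ∈ S₁,
        fderiv ℝ g q (J₁ q (fderiv ℝ f q))
          = fderiv ℝ g q (Tq (J₂ (θ q) ((fderiv ℝ f q).comp Tq))) := by
      intro f hf g hg
      have h1 := hbr f hf g hg q
      rw [hchain f hf, hchain g hg] at h1
      simpa using h1
    have stepB : ∀ ξ : E →L[ℝ] ℝ, (∃ f ∈ S₁, fderiv ℝ f q = ξ) →
        J₁ q ξ = Tq (J₂ (θ q) (ξ.comp Tq)) := by
      rintro ξ ⟨f, hf, rfl⟩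
      set z : E := J₁ q (fderiv ℝ f q) - Tq (J₂ (θ q) ((fderiv ℝ f q).comp Tq)) with hz
      have hz0' : ∀ η : E →L[ℝ] ℝ, η z = 0 := by
        intro η
        have hmem : η ∈ Submodule.span ℝ {ξ : E →L[ℝ] ℝ | ∃ f ∈ S₁, fderiv ℝ f q = ξ} :=
          hspan ▸ Submodule.mem_top
        induction hmem using Submodule.span_induction with
        | mem η hη =>
          obtain ⟨g, hg, rfl⟩ := hη
          have hb := hbr' f hf g hg
          simp [hz, map_sub, hb]
        | zero => simp
        | add η₁ η₂ _ _ h₁ h₂ => simp [h₁, h₂]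
        | smul a η _ h => simp [h]
      have hzz : z = 0 := by
        by_contra hne
        obtain ⟨f', hf'⟩ := SeparatingDual.exists_ne_zero (R := ℝ) hne
        exact hf' (hz0' f')
      have := hz ▸ hzz
      exact sub_eq_zero.1 this
    set L : (E →L[ℝ] ℝ) →ₗ[ℝ] E :=
      { toFun := fun ξ => J₁ q ξ - Tq (J₂ (θ q) (ξ.comp Tq))
        map_add' := by
          intro a b
          simp [ContinuousLinearMap.add_comp, map_add]
          abel
        map_smul' := by
          intro a b
          simp [ContinuousLinearMap.smul_comp, map_smul, smul_sub] } with hL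
    have hLzero : ∀ ξ : E →L[ℝ] ℝ, J₁ q ξ = Tq (J₂ (θ q) (ξ.comp Tq)) := by
      intro ξ
      have hmem : ξ ∈ Submodule.span ℝ {ξ : E →L[ℝ] ℝ | ∃ f ∈ S₁, fderiv ℝ f q = ξ} :=
        hspan ▸ Submodule.mem_top
      have hle : Submodule.span ℝ {ξ : E →L[ℝ] ℝ | ∃ f ∈ S₁, fderiv ℝ f q = ξ}
          ≤ LinearMap.ker L := by
        apply Submodule.span_le.2
        intro ξ' hξ'
        simp only [SetLike.mem_coe, LinearMap.mem_ker]
        show J₁ q ξ' - Tq (J₂ (θ q) (ξ'.comp Tq)) = 0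
        rw [stepB ξ' hξ']
        simp
      have := hle hmem
      rw [LinearMap.mem_ker] at this
      have h2 : J₁ q ξ - Tq (J₂ (θ q) (ξ.comp Tq)) = 0 := this
      exact sub_eq_zero.1 h2
    set ξ : E →L[ℝ] ℝ := (J₁ q).symm v with hξdef
    have hv : J₁ q ξ = v := (J₁ q).apply_symm_apply v
    have hv2 : v = Tq (J₂ (θ q) (ξ.comp Tq)) := by rw [← hv]; exact hLzero ξ
    have hTpv : Tp v = J₂ (θ q) (ξ.comp Tq) := by rw [hv2, hid2]
    calc Ω₁ q v w = Ω₁ q (J₁ q ξ) w := by rw [hv]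
    _ = ξ w := hJ₁ q ξ w
    _ = (ξ.comp Tq) (Tp w) := by simp [ContinuousLinearMap.comp_apply, hid1]
    _ = Ω₂ (θ q) (J₂ (θ q) (ξ.comp Tq)) (Tp w) := (hJ₂ _ _ _).symm
    _ = Ω₂ (θ q) (Tp v) (Tp w) := by rw [hTpv]
  intro p v w
  have hcont1 : Continuous fun p => Ω₁ p v w :=
    (hΩ₁c.clm_apply continuous_const).clm_apply continuous_const
  have hfd : Continuous fun p => fderiv ℝ θ p := hθ.continuous_fderiv (by simp)
  have hcont2 : Continuous fun p => Ω₂ (θ p) (fderiv ℝ θ p v) (fderiv ℝ θ p w) :=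
    ((hΩ₂c.comp hθ.continuous).clm_apply (hfd.clm_apply continuous_const)).clm_apply
      (hfd.clm_apply continuous_const)
  have heq := Continuous.ext_on hdense hcont1 hcont2 (fun q hq => claim2 q hq v w)
  exact congrFun heq p
end

section
/- Every continuous real-valued function on the constraint surface Γ = {p₁² − p₂² − q₁² − q₂² + 1 = 0} ⊂ ℝ⁴ that is constant along each c-orbit must be constant on the whole set E = {A = 0} ∩ Γ, where A = (1/2)(p₁² − q₁²). -/
/-- The flow of the c-orbits on ℝ⁴ with coordinates `(q₁, q₂, p₁, p₂)`. -/
noncomputable def cFlow (x : ℝ × ℝ × ℝ × ℝ) (t : ℝ) : ℝ × ℝ × ℝ × ℝ :=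
  (x.1 * Real.cosh t + x.2.2.1 * Real.sinh t,
   x.2.1 * Real.cos t - x.2.2.2 * Real.sin t,
   x.1 * Real.sinh t + x.2.2.1 * Real.cosh t,
   x.2.1 * Real.sin t + x.2.2.2 * Real.cos t)

/-- The constraint surface `Γ = {p₁² − p₂² − q₁² − q₂² + 1 = 0}`. -/
def GammaSet : Set (ℝ × ℝ × ℝ × ℝ) :=
  {x | x.2.2.1^2 - x.2.2.2^2 - x.1^2 - x.2.1^2 + 1 = 0}

/-- The set `E = {A = 0} ∩ Γ` where `A = (1/2)(p₁² − q₁²)`. -/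
def Eset : Set (ℝ × ℝ × ℝ × ℝ) :=
  {x | (1/2) * (x.2.2.1^2 - x.1^2) = 0} ∩ GammaSet

/-! On `E` one has `p₁ = ±q₁`, so the `(q₁, p₁)`-part of a point of `E` lies on the stable or the
unstable line of the saddle `q̈₁ = q₁` and decays like `e^{-t}` in forward, respectively backward,
time. Sampling the flow at multiples of `2π`, where the rotation in `(q₂, p₂)` has returned, gives
orbit points converging to `(0, q₂, 0, p₂)` on the critical circle `E₀`, so by continuity `f`
takes the same value there; and `E₀` is a single orbit. -/

open Real Filter Topology

lemma cFlow_mem_gammaSet {x : ℝ × ℝ × ℝ × ℝ} (hx : x ∈ GammaSet) (t : ℝ) :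
    cFlow x t ∈ GammaSet := by
  simp only [GammaSet, Set.mem_ofPred_eq, cFlow] at *
  nlinarith [cosh_sq_sub_sinh_sq t, sin_sq_add_cos_sq t]

lemma exists_cos_eq_sin_eq {a b : ℝ} (h : a ^ 2 + b ^ 2 = 1) :
    ∃ t : ℝ, cos t = a ∧ sin t = b := by
  obtain ⟨t, ht⟩ := (Complex.norm_eq_one_iff ⟨a, b⟩).1 <| by
    rw [← pow_eq_one_iff_of_nonneg (norm_nonneg _) two_ne_zero, Complex.sq_norm,
      Complex.normSq_mk, ← h]
    ring
  refine ⟨t, ?_, ?_⟩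
  · simpa using congrArg Complex.re ht
  · simpa using congrArg Complex.im ht

lemma cFlow_critical (t : ℝ) : cFlow (0, 1, 0, 0) t = (0, cos t, 0, sin t) := by
  simp [cFlow]

lemma cFlow_int_mul_two_pi (x : ℝ × ℝ × ℝ × ℝ) (k : ℤ) :
    cFlow x (k * (2 * π)) =
      (x.1 * cosh (k * (2 * π)) + x.2.2.1 * sinh (k * (2 * π)), x.2.1,
        x.1 * sinh (k * (2 * π)) + x.2.2.1 * cosh (k * (2 * π)), x.2.2.2) := by
  simp [cFlow, cos_int_mul_two_pi, sin_periodic.int_mul_eq k]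

lemma exists_cFlow_int_mul_two_pi_eq_exp {x : ℝ × ℝ × ℝ × ℝ} (hx : x.2.2.1 ^ 2 = x.1 ^ 2) :
    ∃ σ : ℤ, ∀ k : ℤ, cFlow x ((σ * k : ℤ) * (2 * π)) =
      (x.1 * exp (-(k * (2 * π))), x.2.1, x.2.2.1 * exp (-(k * (2 * π))), x.2.2.2) := by
  obtain ⟨q₁, q₂, p₁, p₂⟩ := x
  have hdecay (s : ℝ) : cosh s - sinh s = exp (-s) := cosh_sub_sinh s
  rcases sq_eq_sq_iff_eq_or_eq_neg.1 hx with h | h <;> dsimp only at h <;> subst p₁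
  · refine ⟨-1, fun k => ?_⟩
    rw [cFlow_int_mul_two_pi]
    push_cast
    simp only [neg_mul, one_mul, cosh_neg, sinh_neg, Prod.mk.injEq, and_true, true_and]
    constructor <;> linear_combination q₁ * hdecay (k * (2 * π))
  · refine ⟨1, fun k => ?_⟩
    rw [cFlow_int_mul_two_pi]
    push_cast
    simp only [one_mul, Prod.mk.injEq, and_true, true_and]
    constructor
    · linear_combination q₁ * hdecay (k * (2 * π))
    · linear_combination -q₁ * hdecay (k * (2 * π))

lemma tendsto_exp_neg_nat_mul_two_pi :
    Tendsto (fun n : ℕ => exp (-(n * (2 * π)))) atTop (𝓝 0) :=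
  tendsto_exp_atBot.comp <| tendsto_neg_atTop_atBot.comp <|
    tendsto_natCast_atTop_atTop.atTop_mul_const (by positivity)

lemma exists_tendsto_cFlow_of_sq_eq {x : ℝ × ℝ × ℝ × ℝ} (hx : x.2.2.1 ^ 2 = x.1 ^ 2) :
    ∃ τ : ℕ → ℝ, Tendsto (fun n => cFlow x (τ n)) atTop (𝓝 (0, x.2.1, 0, x.2.2.2)) := by
  obtain ⟨σ, hσ⟩ := exists_cFlow_int_mul_two_pi_eq_exp hx
  refine ⟨fun n => (σ * n : ℤ) * (2 * π), ?_⟩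
  simp only [hσ, Int.cast_natCast]
  have hcont : Continuous fun r : ℝ => (x.1 * r, x.2.1, x.2.2.1 * r, x.2.2.2) := by fun_prop
  simpa [Function.comp_def] using (hcont.tendsto 0).comp tendsto_exp_neg_nat_mul_two_pi

lemma ContinuousWithinAt.eq_of_tendsto_of_forall_eq {α X Y : Type*} [TopologicalSpace X]
    [TopologicalSpace Y] [T2Space Y] {f : X → Y} {s : Set X} {y : X} {c : Y}
    {l : Filter α} [l.NeBot] {u : α → X}
    (hf : ContinuousWithinAt f s y) (hu : Tendsto u l (𝓝 y)) (hus : ∀ n, u n ∈ s)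
    (hfu : ∀ n, f (u n) = c) : f y = c := by
  have hu' : Tendsto u l (𝓝[s] y) := tendsto_nhdsWithin_iff.2 ⟨hu, .of_forall hus⟩
  refine tendsto_nhds_unique (hf.tendsto.comp hu') ?_
  simp [Function.comp_def, hfu]

/-- Every continuous function on `Γ` that is constant along each
c-orbit is constant on the whole set `E = {A = 0} ∩ Γ`. -/
theorem stmt11 (f : ℝ × ℝ × ℝ × ℝ → ℝ)
    (hcont : ContinuousOn f GammaSet)
    (hconst : ∀ x ∈ GammaSet, ∀ t : ℝ, f (cFlow x t) = f x) :
    ∀ x ∈ Eset, ∀ y ∈ Eset, f x = f y := by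
  have hbase : ((0 : ℝ), (1 : ℝ), (0 : ℝ), (0 : ℝ)) ∈ GammaSet := by norm_num [GammaSet]
  suffices h : ∀ x ∈ Eset, f x = f (0, 1, 0, 0) from fun x hx y hy => by rw [h x hx, h y hy]
  rintro ⟨q₁, q₂, p₁, p₂⟩ ⟨hA, hx⟩
  have hsq : p₁ ^ 2 = q₁ ^ 2 := by simp only [Set.mem_ofPred_eq] at hA; linarith
  have hcirc : q₂ ^ 2 + p₂ ^ 2 = 1 := by simp only [GammaSet, Set.mem_ofPred_eq] at hx; linarith
  obtain ⟨t, hcos, hsin⟩ := exists_cos_eq_sin_eq hcirc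
  have hy : ((0 : ℝ), q₂, (0 : ℝ), p₂) = cFlow (0, 1, 0, 0) t := by
    rw [cFlow_critical, hcos, hsin]
  obtain ⟨τ, hτ⟩ := exists_tendsto_cFlow_of_sq_eq (x := (q₁, q₂, p₁, p₂)) hsq
  have hyΓ : ((0 : ℝ), q₂, (0 : ℝ), p₂) ∈ GammaSet := hy ▸ cFlow_mem_gammaSet hbase t
  calc f (q₁, q₂, p₁, p₂) = f (0, q₂, 0, p₂) :=
        ((hcont _ hyΓ).eq_of_tendsto_of_forall_eq hτ (fun n => cFlow_mem_gammaSet hx _)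
          (fun n => hconst _ hx _)).symm
    _ = f (0, 1, 0, 0) := by rw [hy, hconst _ hbase]
end

section
/- The functions X₁ = q₂ cos T₋ − p₂ sin T₋, Y₁ = q₂ sin T₋ + p₂ cos T₋ with T₋ = log(p₁ − q₁), defined on {p₁ − q₁ > 0} ⊂ ℝ⁴, are constant along the c-orbits: if q₁(t) = q̄₁ cosh t + p̄₁ sinh t, p₁(t) = q̄₁ sinh t + p̄₁ cosh t, q₂(t) = q̄₂ cos t − p̄₂ sin t, p₂(t) = q̄₂ sin t + p̄₂ cos t with p̄₁ − q̄₁ > 0, then X₁ and Y₁ evaluated along this curve are independent of t. -/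
/-- The functions `X₁ = q₂ cos T₋ − p₂ sin T₋`,
`Y₁ = q₂ sin T₋ + p₂ cos T₋` with `T₋ = log(p₁ − q₁)` are constant along the
c-orbits contained in `{p₁ − q₁ > 0}`. -/
theorem stmt13 (qb1 qb2 pb1 pb2 : ℝ) (h : pb1 - qb1 > 0) :
    let q1 : ℝ → ℝ := fun t => qb1 * Real.cosh t + pb1 * Real.sinh t
    let p1 : ℝ → ℝ := fun t => qb1 * Real.sinh t + pb1 * Real.cosh t
    let q2 : ℝ → ℝ := fun t => qb2 * Real.cos t - pb2 * Real.sin t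
    let p2 : ℝ → ℝ := fun t => qb2 * Real.sin t + pb2 * Real.cos t
    let X1 : ℝ → ℝ → ℝ → ℝ → ℝ := fun a b c d =>
      b * Real.cos (Real.log (c - a)) - d * Real.sin (Real.log (c - a))
    let Y1 : ℝ → ℝ → ℝ → ℝ → ℝ := fun a b c d =>
      b * Real.sin (Real.log (c - a)) + d * Real.cos (Real.log (c - a))
    ∀ t : ℝ,
      p1 t - q1 t > 0 ∧
      X1 (q1 t) (q2 t) (p1 t) (p2 t) = X1 qb1 qb2 pb1 pb2 ∧
      Y1 (q1 t) (q2 t) (p1 t) (p2 t) = Y1 qb1 qb2 pb1 pb2 := by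
  intro q1 p1 q2 p2 X1 Y1 t
  have hdiff : p1 t - q1 t = (pb1 - qb1) * Real.exp (-t) := by
    simp only [q1, p1, Real.cosh_eq, Real.sinh_eq]
    nlinarith [Real.sin_sq_add_cos_sq t]
  have hpos : p1 t - q1 t > 0 := by
    rw [hdiff]; positivity
  have hlog : Real.log (p1 t - q1 t) = Real.log (pb1 - qb1) + -t := by
    rw [hdiff, Real.log_mul (ne_of_gt h) (Real.exp_ne_zero _), Real.log_exp]
  refine ⟨hpos, ?_, ?_⟩ <;>
    simp only [X1, Y1, hlog, q2, p2] <;>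
    rw [show Real.log (pb1 - qb1) + -t = Real.log (pb1 - qb1) - t by ring,
      Real.cos_sub, Real.sin_sub]
  · linear_combination (qb2 * Real.cos (Real.log (pb1 - qb1)) -
      pb2 * Real.sin (Real.log (pb1 - qb1))) * Real.sin_sq_add_cos_sq t
  · linear_combination (qb2 * Real.sin (Real.log (pb1 - qb1)) +
      pb2 * Real.cos (Real.log (pb1 - qb1))) * Real.sin_sq_add_cos_sq t
end

section
/- On {p₁ − q₁ > 0} ⊂ ℝ⁴, the functions X₁, Y₁ (as above) and B = (1/2)(p₂² + q₂²) satisfy the harmonic-oscillator Lie algebra relations with respect to the Poisson bracket: {X₁, Y₁} = 1, {B, X₁} = Y₁ (up to sign conventions: {X₁, B} = −Y₁) and {Y₁, B} = X₁; in particular the span of {X₁, Y₁, B, 1} is closed under the Poisson bracket. -/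
/-!
With `T = log (p₁ - q₁)`, the pair `(X₁, Y₁)` is `(q₂, p₂)` rotated by the angle `T`, so
`∂X₁ = -Y₁ ∂T` and `∂Y₁ = X₁ ∂T` in the `(q₁, p₁)` directions. Since `X₁` and `Y₁` depend on
`(q₁, p₁)` only through `T`, that half of `{X₁, Y₁}` cancels, and the `(q₂, p₂)` half is the
determinant of a rotation, i.e. `1`. Since `B` does not depend on `(q₁, p₁)`, bracketing with `B`
only sees the `(q₂, p₂)` half, which turns `(X₁, Y₁)` by a quarter turn into `(Y₁, -X₁)`.
-/

/-- The Poisson bracket on ℝ⁴ with coordinates (q₁, q₂, p₁, p₂). -/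
noncomputable def poissonBracket (f g : ℝ → ℝ → ℝ → ℝ → ℝ)
    (q1 q2 p1 p2 : ℝ) : ℝ :=
    deriv (fun x => f x q2 p1 p2) q1 * deriv (fun x => g q1 q2 x p2) p1
  - deriv (fun x => f q1 q2 x p2) p1 * deriv (fun x => g x q2 p1 p2) q1
  + deriv (fun x => f q1 x p1 p2) q2 * deriv (fun x => g q1 q2 p1 x) p2
  - deriv (fun x => f q1 q2 p1 x) p2 * deriv (fun x => g q1 x p1 p2) q2

open Real

noncomputable section

namespace HarmonicOscillator

def angle (q1 p1 : ℝ) : ℝ := log (p1 - q1)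

def oscX (q1 q2 p1 p2 : ℝ) : ℝ := q2 * cos (angle q1 p1) - p2 * sin (angle q1 p1)

def oscY (q1 q2 p1 p2 : ℝ) : ℝ := q2 * sin (angle q1 p1) + p2 * cos (angle q1 p1)

def oscB (_q1 q2 _p1 p2 : ℝ) : ℝ := (1 / 2) * (p2 ^ 2 + q2 ^ 2)

section Rotation

variable {g : ℝ → ℝ} {g' x : ℝ}

theorem hasDerivAt_mul_cos_sub_mul_sin (hg : HasDerivAt g g' x) (a b : ℝ) :
    HasDerivAt (fun y => a * cos (g y) - b * sin (g y))
      (-(a * sin (g x) + b * cos (g x)) * g') x :=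
  ((hg.cos.const_mul a).sub (hg.sin.const_mul b)).congr_deriv (by ring)

theorem hasDerivAt_mul_sin_add_mul_cos (hg : HasDerivAt g g' x) (a b : ℝ) :
    HasDerivAt (fun y => a * sin (g y) + b * cos (g y))
      ((a * cos (g x) - b * sin (g x)) * g') x :=
  ((hg.sin.const_mul a).add (hg.cos.const_mul b)).congr_deriv (by ring)

end Rotation

section Partials

variable {q1 q2 p1 p2 : ℝ}

theorem hasDerivAt_angle_left (h : q1 < p1) :
    HasDerivAt (fun x => angle x p1) (-(p1 - q1)⁻¹) q1 :=
  (((hasDerivAt_id' q1).const_sub p1).log (sub_ne_zero.2 h.ne')).congr_deriv (by ring)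

theorem hasDerivAt_angle_right (h : q1 < p1) :
    HasDerivAt (fun x => angle q1 x) (p1 - q1)⁻¹ p1 :=
  (((hasDerivAt_id' p1).sub_const q1).log (sub_ne_zero.2 h.ne')).congr_deriv (by ring)

theorem deriv_oscX_q1 (h : q1 < p1) :
    deriv (fun x => oscX x q2 p1 p2) q1 = oscY q1 q2 p1 p2 * (p1 - q1)⁻¹ := by
  refine ((hasDerivAt_mul_cos_sub_mul_sin (hasDerivAt_angle_left h)) q2 p2).deriv.trans ?_
  rw [oscY]
  ring

theorem deriv_oscX_p1 (h : q1 < p1) :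
    deriv (fun x => oscX q1 q2 x p2) p1 = -(oscY q1 q2 p1 p2 * (p1 - q1)⁻¹) := by
  refine ((hasDerivAt_mul_cos_sub_mul_sin (hasDerivAt_angle_right h)) q2 p2).deriv.trans ?_
  rw [oscY]
  ring

theorem deriv_oscY_q1 (h : q1 < p1) :
    deriv (fun x => oscY x q2 p1 p2) q1 = -(oscX q1 q2 p1 p2 * (p1 - q1)⁻¹) := by
  refine ((hasDerivAt_mul_sin_add_mul_cos (hasDerivAt_angle_left h)) q2 p2).deriv.trans ?_
  rw [oscX]
  ring

theorem deriv_oscY_p1 (h : q1 < p1) :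
    deriv (fun x => oscY q1 q2 x p2) p1 = oscX q1 q2 p1 p2 * (p1 - q1)⁻¹ := by
  refine ((hasDerivAt_mul_sin_add_mul_cos (hasDerivAt_angle_right h)) q2 p2).deriv.trans ?_
  rw [oscX]

theorem deriv_oscX_q2 : deriv (fun x => oscX q1 x p1 p2) q2 = cos (angle q1 p1) := by
  simp [oscX]

theorem deriv_oscX_p2 : deriv (fun x => oscX q1 q2 p1 x) p2 = -sin (angle q1 p1) := by
  simp [oscX]

theorem deriv_oscY_q2 : deriv (fun x => oscY q1 x p1 p2) q2 = sin (angle q1 p1) := by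
  simp [oscY]

theorem deriv_oscY_p2 : deriv (fun x => oscY q1 q2 p1 x) p2 = cos (angle q1 p1) := by
  simp [oscY]

theorem deriv_oscB_q1 : deriv (fun x => oscB x q2 p1 p2) q1 = 0 := by
  simp [oscB]

theorem deriv_oscB_p1 : deriv (fun x => oscB q1 q2 x p2) p1 = 0 := by
  simp [oscB]

theorem deriv_oscB_q2 : deriv (fun x => oscB q1 x p1 p2) q2 = q2 := by
  simp [oscB]

theorem deriv_oscB_p2 : deriv (fun x => oscB q1 q2 p1 x) p2 = p2 := by
  simp [oscB]

theorem poissonBracket_oscX_oscY (h : q1 < p1) : poissonBracket oscX oscY q1 q2 p1 p2 = 1 := by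
  rw [poissonBracket, deriv_oscX_q1 h, deriv_oscX_p1 h, deriv_oscX_q2, deriv_oscX_p2,
    deriv_oscY_q1 h, deriv_oscY_p1 h, deriv_oscY_q2, deriv_oscY_p2]
  linear_combination sin_sq_add_cos_sq (angle q1 p1)

theorem poissonBracket_oscX_oscB :
    poissonBracket oscX oscB q1 q2 p1 p2 = oscY q1 q2 p1 p2 := by
  rw [poissonBracket, deriv_oscX_q2, deriv_oscX_p2, deriv_oscB_q1, deriv_oscB_p1,
    deriv_oscB_q2, deriv_oscB_p2, oscY]
  ring

theorem poissonBracket_oscY_oscB :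
    poissonBracket oscY oscB q1 q2 p1 p2 = -oscX q1 q2 p1 p2 := by
  rw [poissonBracket, deriv_oscY_q2, deriv_oscY_p2, deriv_oscB_q1, deriv_oscB_p1,
    deriv_oscB_q2, deriv_oscB_p2, oscX]
  ring

end Partials

end HarmonicOscillator

end

/-- On `{p₁ − q₁ > 0}`, the functions `X₁`, `Y₁` and
`B = (1/2)(p₂² + q₂²)` satisfy the harmonic-oscillator Lie algebra relations
`{X₁, Y₁} = 1`, `{X₁, B} = Y₁`, `{Y₁, B} = −X₁` (signs fixed by computation);
in particular the span of `{X₁, Y₁, B, 1}` is closed under the Poisson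
bracket. -/
theorem stmt14 :
    let X1 : ℝ → ℝ → ℝ → ℝ → ℝ := fun q1 q2 p1 p2 =>
      q2 * Real.cos (Real.log (p1 - q1)) - p2 * Real.sin (Real.log (p1 - q1))
    let Y1 : ℝ → ℝ → ℝ → ℝ → ℝ := fun q1 q2 p1 p2 =>
      q2 * Real.sin (Real.log (p1 - q1)) + p2 * Real.cos (Real.log (p1 - q1))
    let B : ℝ → ℝ → ℝ → ℝ → ℝ := fun _ q2 _ p2 => (1/2) * (p2^2 + q2^2)
    ∀ q1 q2 p1 p2 : ℝ, p1 - q1 > 0 →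
      poissonBracket X1 Y1 q1 q2 p1 p2 = 1 ∧
      poissonBracket X1 B q1 q2 p1 p2 = Y1 q1 q2 p1 p2 ∧
      poissonBracket Y1 B q1 q2 p1 p2 = -(X1 q1 q2 p1 p2) := by
  intro X1 Y1 B q1 q2 p1 p2 h
  exact ⟨HarmonicOscillator.poissonBracket_oscX_oscY (sub_pos.1 h),
    HarmonicOscillator.poissonBracket_oscX_oscB, HarmonicOscillator.poissonBracket_oscY_oscB⟩
end

section
/- The Hamiltonian vector fields of X₁ and Y₁ on the open set {p₁ − q₁ > 0} ⊂ ℝ⁴ are complete: every maximal integral curve is defined for all times. (Key step: {X₁, p₁−q₁} = {Y₁, p₁−q₁} = 0, so the flows preserve each level set {p₁ − q₁ = c}, c > 0, on which the vector fields are affine/linear in the remaining variables.) -/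
/-! Both `X₁` and `Y₁` have the form `q₂ a(p₁ − q₁) + p₂ b(p₁ − q₁)`. For such a Hamiltonian the
`q₁`- and `p₁`-components of the vector field agree, so `p₁ − q₁ = w` is conserved; on that level set
`(q₂, p₂)` moves with the constant velocity `(b w, −a w)`, and `q₁`, `p₁` then move with a speed that is
affine in time. The flow is therefore an explicit polynomial in `t`, defined for all times. -/

/-- The Hamiltonian vector field `ξ_f = f_{p₁} ∂_{q₁} + f_{p₂} ∂_{q₂}
 − f_{q₁} ∂_{p₁} − f_{q₂} ∂_{p₂}` of a function `f` on ℝ⁴ with coordinates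
`(q₁, q₂, p₁, p₂)` (convention `ξ_f g = {g, f}`). -/
noncomputable def hamVF (f : ℝ × ℝ × ℝ × ℝ → ℝ) (x : ℝ × ℝ × ℝ × ℝ) :
    ℝ × ℝ × ℝ × ℝ :=
  (deriv (fun a => f (x.1, x.2.1, a, x.2.2.2)) x.2.2.1,
   deriv (fun a => f (x.1, x.2.1, x.2.2.1, a)) x.2.2.2,
   -deriv (fun a => f (a, x.2.1, x.2.2.1, x.2.2.2)) x.1,
   -deriv (fun a => f (x.1, a, x.2.2.1, x.2.2.2)) x.2.1)

open Real

def linearInQ₂P₂ (a b : ℝ → ℝ) (x : ℝ × ℝ × ℝ × ℝ) : ℝ :=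
  x.2.1 * a (x.2.2.1 - x.1) + x.2.2.2 * b (x.2.2.1 - x.1)

theorem hamVF_linearInQ₂P₂ {a b : ℝ → ℝ} (q₁ q₂ p₁ p₂ : ℝ)
    (ha : DifferentiableAt ℝ a (p₁ - q₁)) (hb : DifferentiableAt ℝ b (p₁ - q₁)) :
    hamVF (linearInQ₂P₂ a b) (q₁, q₂, p₁, p₂) =
      (q₂ * deriv a (p₁ - q₁) + p₂ * deriv b (p₁ - q₁), b (p₁ - q₁),
        q₂ * deriv a (p₁ - q₁) + p₂ * deriv b (p₁ - q₁), -a (p₁ - q₁)) := by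
  have hp₁ : HasDerivAt (fun r => q₂ * a (r - q₁) + p₂ * b (r - q₁))
      (q₂ * deriv a (p₁ - q₁) + p₂ * deriv b (p₁ - q₁)) p₁ :=
    ((ha.hasDerivAt.comp_sub_const p₁ q₁).const_mul q₂).add
      ((hb.hasDerivAt.comp_sub_const p₁ q₁).const_mul p₂)
  have hq₁ : HasDerivAt (fun r => q₂ * a (p₁ - r) + p₂ * b (p₁ - r))
      (q₂ * -deriv a (p₁ - q₁) + p₂ * -deriv b (p₁ - q₁)) q₁ :=
    ((ha.hasDerivAt.comp_const_sub p₁ q₁).const_mul q₂).add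
      ((hb.hasDerivAt.comp_const_sub p₁ q₁).const_mul p₂)
  have hp₂ : HasDerivAt (fun r => q₂ * a (p₁ - q₁) + r * b (p₁ - q₁)) (b (p₁ - q₁)) p₂ := by
    simpa using (hasDerivAt_mul_const (b (p₁ - q₁))).const_add (q₂ * a (p₁ - q₁))
  have hq₂ : HasDerivAt (fun r => r * a (p₁ - q₁) + p₂ * b (p₁ - q₁)) (a (p₁ - q₁)) q₂ := by
    simpa using (hasDerivAt_mul_const (a (p₁ - q₁))).add_const (p₂ * b (p₁ - q₁))
  simp only [hamVF, linearInQ₂P₂]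
  rw [hp₁.deriv, hq₁.deriv, hp₂.deriv, hq₂.deriv]
  simp only [mul_neg, neg_add, neg_neg]

theorem exists_integralCurve_hamVF_linearInQ₂P₂ {a b : ℝ → ℝ} (x₀ : ℝ × ℝ × ℝ × ℝ)
    (ha : DifferentiableAt ℝ a (x₀.2.2.1 - x₀.1)) (hb : DifferentiableAt ℝ b (x₀.2.2.1 - x₀.1)) :
    ∃ γ : ℝ → ℝ × ℝ × ℝ × ℝ, γ 0 = x₀ ∧ ∀ t : ℝ,
      (γ t).2.2.1 - (γ t).1 = x₀.2.2.1 - x₀.1 ∧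
      HasDerivAt γ (hamVF (linearInQ₂P₂ a b) (γ t)) t := by
  obtain ⟨q₁, q₂, p₁, p₂⟩ := x₀
  -- `g' t = (q₂ + t b w) a' w + (p₂ − t a w) b' w = k + ω t`
  set w := p₁ - q₁
  set k := q₂ * deriv a w + p₂ * deriv b w
  set ω := b w * deriv a w - a w * deriv b w
  set g : ℝ → ℝ := fun t => k * t + ω * t ^ 2 / 2
  refine ⟨fun t => (q₁ + g t, q₂ + t * b w, p₁ + g t, p₂ - t * a w), by simp [g], fun t => ?_⟩
  have hw : p₁ + g t - (q₁ + g t) = w := by ring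
  refine ⟨hw, ?_⟩
  simp only at ha hb ⊢
  rw [hamVF_linearInQ₂P₂, hw]
  · have hg : HasDerivAt g (k + ω * t) t := by
      refine (((hasDerivAt_id' t).const_mul k).add
        (((hasDerivAt_pow 2 t).const_mul ω).div_const 2)).congr_deriv ?_
      norm_num
      ring
    refine ((hg.const_add q₁).prodMk ((((hasDerivAt_id' t).mul_const (b w)).const_add q₂).prodMk
      ((hg.const_add p₁).prodMk (((hasDerivAt_id' t).mul_const (a w)).const_sub p₂)))).congr_deriv ?_
    ext <;> simp only [k, ω] <;> ring
  all_goals rwa [hw]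

/-- The Hamiltonian vector fields of `X₁` and `Y₁` on the open set
`{p₁ − q₁ > 0}` are complete: through every point there is an integral curve
defined for all times and remaining in the set. -/
theorem stmt15 :
    let D : Set (ℝ × ℝ × ℝ × ℝ) := {x | x.2.2.1 - x.1 > 0}
    let X1 : ℝ × ℝ × ℝ × ℝ → ℝ := fun x =>
      x.2.1 * Real.cos (Real.log (x.2.2.1 - x.1))
        - x.2.2.2 * Real.sin (Real.log (x.2.2.1 - x.1))
    let Y1 : ℝ × ℝ × ℝ × ℝ → ℝ := fun x =>
      x.2.1 * Real.sin (Real.log (x.2.2.1 - x.1))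
        + x.2.2.2 * Real.cos (Real.log (x.2.2.1 - x.1))
    ∀ x₀ ∈ D,
      (∃ γ : ℝ → ℝ × ℝ × ℝ × ℝ, γ 0 = x₀ ∧
        ∀ t : ℝ, γ t ∈ D ∧ HasDerivAt γ (hamVF X1 (γ t)) t) ∧
      (∃ γ : ℝ → ℝ × ℝ × ℝ × ℝ, γ 0 = x₀ ∧
        ∀ t : ℝ, γ t ∈ D ∧ HasDerivAt γ (hamVF Y1 (γ t)) t) := by
  intro D X1 Y1 x₀ hx₀
  have hw : x₀.2.2.1 - x₀.1 ≠ 0 := ne_of_gt hx₀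
  have hD : ∀ x, x.2.2.1 - x.1 = x₀.2.2.1 - x₀.1 → x ∈ D := fun x hx =>
    show x.2.2.1 - x.1 > 0 from hx ▸ hx₀
  have hX1 : X1 = linearInQ₂P₂ (fun r => cos (log r)) (fun r => -sin (log r)) := by
    funext x
    simp only [X1, linearInQ₂P₂]
    ring
  have hY1 : Y1 = linearInQ₂P₂ (fun r => sin (log r)) (fun r => cos (log r)) := rfl
  constructor
  · obtain ⟨γ, hγ₀, hγ⟩ := exists_integralCurve_hamVF_linearInQ₂P₂ (a := fun r => cos (log r))
      (b := fun r => -sin (log r)) x₀ (by fun_prop (disch := exact hw)) (by fun_prop (disch := exact hw))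
    exact ⟨γ, hγ₀, fun t => ⟨hD _ (hγ t).1, hX1 ▸ (hγ t).2⟩⟩
  · obtain ⟨γ, hγ₀, hγ⟩ := exists_integralCurve_hamVF_linearInQ₂P₂ (a := fun r => sin (log r))
      (b := fun r => cos (log r)) x₀ (by fun_prop (disch := exact hw)) (by fun_prop (disch := exact hw))
    exact ⟨γ, hγ₀, fun t => ⟨hD _ (hγ t).1, hY1 ▸ (hγ t).2⟩⟩
end
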